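/- arXiv:2403.02515 — 2 statements merged into one kernel-verified Lean document; each statement's English description precedes it below -/
import Mathlib

section
/- Glynn's formula: for any n×n complex matrix A, perm(A) = (1/2^n) Σ_{b ∈ {±1}^n} Π_{j=1}^n b_j (Ab)_j, where the sum is over all ±1 vectors b. -/
/-!
Expanding the product over `j` gives
`∑_b ∏_j b_j (A b)_j = ∑_{f : [n] → [n]} (∏_j A_{j f(j)}) ∑_b ∏_j b_j b_{f(j)}`.
When `f` is a permutation the inner summand is `(∏_j b_j)² = 1`, so the inner sum is `2ⁿ`.
Otherwise some `i` lies outside the range of `f`; flipping the sign `b_i` negates the summand,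
so the inner sum vanishes.
-/

/-- The permanent of an `n × n` complex matrix. -/
noncomputable def permanent {n : ℕ} (A : Matrix (Fin n) (Fin n) ℂ) : ℂ :=
  ∑ σ : Equiv.Perm (Fin n), ∏ i, A i (σ i)

/-- Interpret a boolean as a sign `±1`. -/
noncomputable def pmOne (x : Bool) : ℂ := if x then 1 else -1

open Finset Function

lemma pmOne_mul_self (x : Bool) : pmOne x * pmOne x = 1 := by
  cases x <;> simp [pmOne]

lemma pmOne_not (x : Bool) : pmOne (!x) = -pmOne x := by
  cases x <;> simp [pmOne]

section

variable {ι : Type*} [Fintype ι]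

lemma prod_pmOne_mul_pmOne_perm (σ : Equiv.Perm ι) (b : ι → Bool) :
    ∏ j, pmOne (b j) * pmOne (b (σ j)) = 1 := by
  rw [prod_mul_distrib, Equiv.prod_comp σ (fun i ↦ pmOne (b i)), ← prod_mul_distrib]
  exact prod_eq_one fun j _ ↦ pmOne_mul_self (b j)

variable [DecidableEq ι]

lemma prod_pmOne_update_not (b : ι → Bool) (i : ι) :
    ∏ j, pmOne (update b i (!b i) j) = -∏ j, pmOne (b j) := by
  rw [Fintype.prod_eq_mul_prod_compl i, Fintype.prod_eq_mul_prod_compl i]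
  have h_compl : ∀ j ∈ ({i}ᶜ : Finset ι), update b i (!b i) j = b j :=
    fun j hj ↦ update_of_ne (by simpa using hj) _ _
  rw [prod_congr rfl fun j hj ↦ congrArg pmOne (h_compl j hj), update_self, pmOne_not, neg_mul]

lemma sum_prod_pmOne_mul_pmOne_of_notMem_range {f : ι → ι} {i : ι} (hi : i ∉ Set.range f) :
    ∑ b : ι → Bool, ∏ j, pmOne (b j) * pmOne (b (f j)) = 0 := by
  refine sum_ninvolution (fun b ↦ update b i (!b i)) (fun b ↦ ?_) (fun b _ ↦ ?_)
    (fun _ ↦ mem_univ _) (fun b ↦ by simp)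
  · have hfi : ∀ j, f j ≠ i := fun j h ↦ hi ⟨j, h⟩
    simp only [prod_mul_distrib, update_of_ne (hfi _), prod_pmOne_update_not]
    ring
  · exact fun h ↦ by simpa using congrFun h i

lemma sum_prod_pmOne_mul_pmOne_comp (f : ι → ι) :
    ∑ b : ι → Bool, ∏ j, pmOne (b j) * pmOne (b (f j)) =
      if Bijective f then 2 ^ Fintype.card ι else 0 := by
  by_cases hf : Bijective f
  · lift f to Equiv.Perm ι using hf
    simp [prod_pmOne_mul_pmOne_perm]
  · obtain ⟨i, hi⟩ : ∃ i, i ∉ Set.range f := by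
      contrapose! hf
      exact Finite.surjective_iff_bijective.mp hf
    rw [if_neg hf, sum_prod_pmOne_mul_pmOne_of_notMem_range hi]

lemma sum_ite_bijective {M : Type*} [AddCommMonoid M] (g : (ι → ι) → M) :
    ∑ f : ι → ι, (if Bijective f then g f else 0) = ∑ σ : Equiv.Perm ι, g σ := by
  rw [← sum_filter]
  symm
  exact sum_bij (fun σ _ ↦ ⇑σ) (fun σ _ ↦ by simp)
    (fun _ _ _ _ h ↦ Equiv.coe_fn_injective h)
    (fun f hf ↦ ⟨Equiv.ofBijective f (by simpa using hf), mem_univ _, rfl⟩) (fun _ _ ↦ rfl)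

lemma prod_pmOne_mul_sum_mul_pmOne (A : Matrix ι ι ℂ) (b : ι → Bool) :
    ∏ j, pmOne (b j) * ∑ i, A j i * pmOne (b i) =
      ∑ f : ι → ι, (∏ j, A j (f j)) * ∏ j, pmOne (b j) * pmOne (b (f j)) := by
  simp_rw [mul_sum, prod_univ_sum, ← prod_mul_distrib]
  exact sum_congr rfl fun f _ ↦ prod_congr rfl fun j _ ↦ by ring

theorem sum_prod_pmOne_mul_sum_mul_pmOne (A : Matrix ι ι ℂ) :
    ∑ b : ι → Bool, ∏ j, pmOne (b j) * ∑ i, A j i * pmOne (b i) =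
      2 ^ Fintype.card ι * ∑ σ : Equiv.Perm ι, ∏ i, A i (σ i) := by
  calc ∑ b : ι → Bool, ∏ j, pmOne (b j) * ∑ i, A j i * pmOne (b i)
      = ∑ f : ι → ι, (∏ j, A j (f j)) *
          ∑ b : ι → Bool, ∏ j, pmOne (b j) * pmOne (b (f j)) := by
        simp_rw [prod_pmOne_mul_sum_mul_pmOne, mul_sum]
        exact sum_comm
    _ = ∑ f : ι → ι, if Bijective f then 2 ^ Fintype.card ι * ∏ j, A j (f j) else 0 := by
        simp_rw [sum_prod_pmOne_mul_pmOne_comp, mul_ite, mul_zero, mul_comm]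
    _ = 2 ^ Fintype.card ι * ∑ σ : Equiv.Perm ι, ∏ i, A i (σ i) := by
        rw [sum_ite_bijective, mul_sum]

end

/-- Glynn's formula: for any `n × n` complex matrix `A`,
`perm A = 2⁻ⁿ Σ_{b ∈ {±1}ⁿ} Π_j b_j (A b)_j`. -/
theorem glynn_formula {n : ℕ} (A : Matrix (Fin n) (Fin n) ℂ) :
    permanent A =
      (1 / 2 ^ n) *
        ∑ b : Fin n → Bool, ∏ j, pmOne (b j) * (∑ i, A j i * pmOne (b i)) := by
  rw [sum_prod_pmOne_mul_sum_mul_pmOne, Fintype.card_fin, permanent]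
  field_simp
end

section
/- Generalized X-measurement on fully distinguishable photons: with input density matrix built from c₁₀|φ₁₀⟩⊗(photon in mode 0, internal state ξ) + c₀₁|φ₀₁⟩⊗(photon in mode 1, internal state ξ') with ⟨ξ'|ξ⟩ = 0, the post-measurement state after the Hadamard beamsplitter and projection onto a single-photon outcome is the mixed state (|c₁₀|²|φ₁₀⟩⟨φ₁₀| + |c₀₁|²|φ₀₁⟩⟨φ₀₁|)/(|c₁₀|²+|c₀₁|²), for either measurement outcome. -/
open scoped ComplexConjugate

/-!
The post-measurement vector is `a ⊗ ξ + b ⊗ ξ'` with `a = c₁₀ φ₁₀ / √2` and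
`b = s c₀₁ φ₀₁ / √2`. Since `ξ, ξ'` are orthonormal, tracing out the internal space leaves
`|a⟩⟨a| + |b⟩⟨b|` with no cross terms, and `|s| = 1` makes the result independent of the outcome.
-/

/-- The (unnormalized) post-measurement vector on `H' ⊗ K` after the Hadamard beamsplitter
and projection of the mode factor onto `|1,0⟩` (sign `s = 1`) or `|0,1⟩` (sign `s = -1`),
for the input `c₁₀|φ₁₀⟩ ⊗ (photon in mode 0, internal ξ) + c₀₁|φ₀₁⟩ ⊗ (photon in mode 1,
internal ξ')`. -/
noncomputable def postMeasVec {p q : ℕ} (c₁₀ c₀₁ : ℂ) (φ₁₀ φ₀₁ : Fin p → ℂ)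
    (ξ ξ' : Fin q → ℂ) (s : ℂ) : Fin p → Fin q → ℂ :=
  fun h k => ((Real.sqrt 2 : ℂ))⁻¹ * (c₁₀ * φ₁₀ h * ξ k + s * (c₀₁ * φ₀₁ h * ξ' k))

section PartialTrace

variable {κ : Type*} [Fintype κ]

theorem sum_mul_conj_self_eq_ofReal (z : κ → ℂ) :
    ∑ k, z k * conj (z k) = ((∑ k, ‖z k‖ ^ 2 : ℝ) : ℂ) := by
  push_cast
  exact Finset.sum_congr rfl fun k _ => Complex.mul_conj' (z k)

theorem sum_mul_conj_of_orthonormal (a a' b b' : ℂ) {ξ ξ' : κ → ℂ}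
    (hξ : ∑ k, ‖ξ k‖ ^ 2 = 1) (hξ' : ∑ k, ‖ξ' k‖ ^ 2 = 1)
    (horth : ∑ k, conj (ξ' k) * ξ k = 0) :
    ∑ k, (a * ξ k + b * ξ' k) * conj (a' * ξ k + b' * ξ' k) =
      a * conj a' + b * conj b' := by
  have hξξ : ∑ k, ξ k * conj (ξ k) = 1 := by
    rw [sum_mul_conj_self_eq_ofReal, hξ, Complex.ofReal_one]
  have hξ'ξ' : ∑ k, ξ' k * conj (ξ' k) = 1 := by
    rw [sum_mul_conj_self_eq_ofReal, hξ', Complex.ofReal_one]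
  have hξξ' : ∑ k, ξ k * conj (ξ' k) = 0 := by
    simpa only [mul_comm] using horth
  have hξ'ξ : ∑ k, ξ' k * conj (ξ k) = 0 := by
    simpa only [map_sum, map_mul, Complex.conj_conj, map_zero, mul_comm] using congrArg conj hξξ'
  have expand : ∀ k, (a * ξ k + b * ξ' k) * conj (a' * ξ k + b' * ξ' k) =
      a * conj a' * (ξ k * conj (ξ k)) + b * conj b' * (ξ' k * conj (ξ' k)) +
        a * conj b' * (ξ k * conj (ξ' k)) + b * conj a' * (ξ' k * conj (ξ k)) := by
    intro k
    simp only [map_add, map_mul]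
    ring
  simp only [expand, Finset.sum_add_distrib, ← Finset.mul_sum, hξξ, hξ'ξ', hξξ', hξ'ξ]
  ring

end PartialTrace

theorem ofReal_sqrt_two_inv_mul_conj :
    ((Real.sqrt 2 : ℂ))⁻¹ * conj ((Real.sqrt 2 : ℂ))⁻¹ = 2⁻¹ := by
  rw [map_inv₀, Complex.conj_ofReal, ← mul_inv, ← Complex.ofReal_mul,
    Real.mul_self_sqrt zero_le_two, Complex.ofReal_ofNat]

theorem postMeasVec_eq {p q : ℕ} (c₁₀ c₀₁ : ℂ) (φ₁₀ φ₀₁ : Fin p → ℂ) (ξ ξ' : Fin q → ℂ)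
    (s : ℂ) (h : Fin p) (k : Fin q) :
    postMeasVec c₁₀ c₀₁ φ₁₀ φ₀₁ ξ ξ' s h k =
      (Real.sqrt 2 : ℂ)⁻¹ * c₁₀ * φ₁₀ h * ξ k + (Real.sqrt 2 : ℂ)⁻¹ * s * c₀₁ * φ₀₁ h * ξ' k := by
  rw [postMeasVec]
  ring

theorem sum_postMeasVec_mul_conj {p q : ℕ} (c₁₀ c₀₁ : ℂ) (φ₁₀ φ₀₁ : Fin p → ℂ)
    {ξ ξ' : Fin q → ℂ} (hξ : ∑ k, ‖ξ k‖ ^ 2 = 1) (hξ' : ∑ k, ‖ξ' k‖ ^ 2 = 1)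
    (horth : ∑ k, conj (ξ' k) * ξ k = 0) {s : ℂ} (hs : s * conj s = 1) (h h' : Fin p) :
    ∑ k, postMeasVec c₁₀ c₀₁ φ₁₀ φ₀₁ ξ ξ' s h k *
        conj (postMeasVec c₁₀ c₀₁ φ₁₀ φ₀₁ ξ ξ' s h' k) =
      ((‖c₁₀‖ ^ 2 : ℝ) * (φ₁₀ h * conj (φ₁₀ h')) +
        (‖c₀₁‖ ^ 2 : ℝ) * (φ₀₁ h * conj (φ₀₁ h'))) / 2 := by
  simp only [postMeasVec_eq]
  rw [sum_mul_conj_of_orthonormal _ _ _ _ hξ hξ' horth]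
  simp only [map_mul, Complex.ofReal_pow, ← Complex.mul_conj']
  linear_combination (c₀₁ * conj c₀₁ * φ₀₁ h * conj (φ₀₁ h')) * 2⁻¹ * hs +
    (c₁₀ * conj c₁₀ * φ₁₀ h * conj (φ₁₀ h') +
      s * conj s * c₀₁ * conj c₀₁ * φ₀₁ h * conj (φ₀₁ h')) * ofReal_sqrt_two_inv_mul_conj

theorem generalized_X_measurement_distinguishable_general {p q : ℕ}
    (c₁₀ c₀₁ : ℂ) (φ₁₀ φ₀₁ : Fin p → ℂ) (ξ ξ' : Fin q → ℂ)
    (hξ : ∑ k, ‖ξ k‖ ^ 2 = 1) (hξ' : ∑ k, ‖ξ' k‖ ^ 2 = 1)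
    (horth : ∑ k, conj (ξ' k) * ξ k = 0) :
    ∀ s ∈ ({1, -1} : Set ℂ), ∀ h h' : Fin p,
      (∑ k, postMeasVec c₁₀ c₀₁ φ₁₀ φ₀₁ ξ ξ' s h k *
          conj (postMeasVec c₁₀ c₀₁ φ₁₀ φ₀₁ ξ ξ' s h' k)) /
          (((‖c₁₀‖ ^ 2 + ‖c₀₁‖ ^ 2 : ℝ) : ℂ) / 2) =
        ((‖c₁₀‖ ^ 2 : ℝ) * (φ₁₀ h * conj (φ₁₀ h')) +
            (‖c₀₁‖ ^ 2 : ℝ) * (φ₀₁ h * conj (φ₀₁ h'))) /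
          ((‖c₁₀‖ ^ 2 + ‖c₀₁‖ ^ 2 : ℝ) : ℂ) := by
  intro s hs h h'
  have hs_unit : s * conj s = 1 := by rcases hs with rfl | rfl <;> simp
  rw [sum_postMeasVec_mul_conj c₁₀ c₀₁ φ₁₀ φ₀₁ hξ hξ' horth hs_unit, div_div_eq_mul_div,
    div_mul_cancel₀ _ two_ne_zero]

/-- Generalized X-measurement on fully distinguishable photons (`⟨ξ'|ξ⟩ = 0`): for either
measurement outcome, the normalized post-measurement state on `H'`, obtained by tracing out
the internal space `K`, is the mixed state
`(|c₁₀|²|φ₁₀⟩⟨φ₁₀| + |c₀₁|²|φ₀₁⟩⟨φ₀₁|)/(|c₁₀|²+|c₀₁|²)`. -/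
theorem generalized_X_measurement_distinguishable {p q : ℕ}
    (c₁₀ c₀₁ : ℂ) (φ₁₀ φ₀₁ : Fin p → ℂ) (ξ ξ' : Fin q → ℂ)
    (hφ₁₀ : ∑ h, ‖φ₁₀ h‖ ^ 2 = 1) (hφ₀₁ : ∑ h, ‖φ₀₁ h‖ ^ 2 = 1)
    (hξ : ∑ k, ‖ξ k‖ ^ 2 = 1) (hξ' : ∑ k, ‖ξ' k‖ ^ 2 = 1)
    (horth : ∑ k, conj (ξ' k) * ξ k = 0) :
    ∀ s ∈ ({1, -1} : Set ℂ), ∀ h h' : Fin p,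
      (∑ k, postMeasVec c₁₀ c₀₁ φ₁₀ φ₀₁ ξ ξ' s h k *
          conj (postMeasVec c₁₀ c₀₁ φ₁₀ φ₀₁ ξ ξ' s h' k)) /
          (((‖c₁₀‖ ^ 2 + ‖c₀₁‖ ^ 2 : ℝ) : ℂ) / 2) =
        ((‖c₁₀‖ ^ 2 : ℝ) * (φ₁₀ h * conj (φ₁₀ h')) +
            (‖c₀₁‖ ^ 2 : ℝ) * (φ₀₁ h * conj (φ₀₁ h'))) /
          ((‖c₁₀‖ ^ 2 + ‖c₀₁‖ ^ 2 : ℝ) : ℂ) :=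
  generalized_X_measurement_distinguishable_general c₁₀ c₀₁ φ₁₀ φ₀₁ ξ ξ' hξ hξ' horth
end
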